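/- The element [s⁻¹ a^h s, a^p b⁻¹] of G_{p,q} is mapped to the identity by every homomorphism from G_{p,q} to a finite group, whenever p, q are nonzero integers with q ∤ 2p and h = gcd(2p, q). -/

import Mathlib

/-- The free group generators: 0 ↦ a, 1 ↦ b, 2 ↦ s, 3 ↦ t. -/
def ga : FreeGroup (Fin 4) := FreeGroup.of 0
def gb : FreeGroup (Fin 4) := FreeGroup.of 1
def gs : FreeGroup (Fin 4) := FreeGroup.of 2
def gt : FreeGroup (Fin 4) := FreeGroup.of 3

/-- Relators of the tubular group `G_{p,q}`. -/
def tubularRels (p q : ℤ) : Set (FreeGroup (Fin 4)) :=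
  { ga * gb * ga⁻¹ * gb⁻¹,
    gs⁻¹ * ga ^ q * gs * (ga ^ p * gb)⁻¹,
    gt⁻¹ * ga ^ q * gt * (ga ^ p * gb⁻¹)⁻¹ }

open scoped commutatorElement

/-!
In a finite quotient the relations conjugate `a ^ q` to `a ^ p * b` and to `a ^ p * b⁻¹`, which
commute and multiply to `a ^ (2 * p)`; so the order of `a ^ (2 * p)` divides that of `a ^ q`.
In the finite cyclic group `⟨a⟩` this puts `a ^ (2 * p)`, hence also `a ^ gcd(2 * p, q)`, into
`⟨a ^ q⟩`. Conjugating by `s` makes `s⁻¹ * a ^ h * s` a power of `a ^ p * b`, which commutes with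
`a ^ p * b⁻¹`.
-/

open Subgroup

theorem Subgroup.zpow_gcd_mem {G : Type*} [Group G] (H : Subgroup G) {x : G} {m n : ℤ}
    (hm : x ^ m ∈ H) (hn : x ^ n ∈ H) : x ^ (m.gcd n : ℤ) ∈ H := by
  rw [Int.gcd_eq_gcd_ab, zpow_add, zpow_mul, zpow_mul]
  exact H.mul_mem (H.zpow_mem hm _) (H.zpow_mem hn _)

section OrderOf

variable {G : Type*} [Group G] {x : G}

theorem IsOfFinOrder.gcd_orderOf_dvd (hx : IsOfFinOrder x) {n k : ℤ}
    (h : orderOf (x ^ n) ∣ orderOf (x ^ k)) : ((orderOf x : ℤ).gcd k : ℤ) ∣ n := by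
  set r : ℤ := (orderOf x : ℤ) with hr_def
  have hr : r ≠ 0 := by simpa [r] using hx.orderOf_pos.ne'
  obtain ⟨r', hr'⟩ := Int.gcd_dvd_left r k
  obtain ⟨k', hk'⟩ := Int.gcd_dvd_right r k
  have hr'0 : r' ≠ 0 := by rintro rfl; exact hr (by rw [hr', mul_zero])
  -- `r' = r / gcd(r, k)` kills `x ^ k`, so it is a multiple of the order of `x ^ k` ...
  have hkr' : (orderOf (x ^ k) : ℤ) ∣ r' := by
    rw [orderOf_dvd_iff_zpow_eq_one, ← zpow_mul, hk', mul_assoc, mul_left_comm, ← hr',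
      zpow_mul', hr_def, zpow_natCast, pow_orderOf_eq_one, one_zpow]
  -- ... and hence kills `x ^ n` too.
  have hnr' : r ∣ n * r' := by
    rw [hr_def, orderOf_dvd_iff_zpow_eq_one, zpow_mul, ← orderOf_dvd_iff_zpow_eq_one]
    exact (Int.natCast_dvd_natCast.mpr h).trans hkr'
  rw [hr'] at hnr'
  exact Int.dvd_of_mul_dvd_mul_right hr'0 hnr'

theorem IsOfFinOrder.zpow_mem_zpowers_zpow (hx : IsOfFinOrder x) {n k : ℤ}
    (h : orderOf (x ^ n) ∣ orderOf (x ^ k)) : x ^ n ∈ zpowers (x ^ k) := by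
  obtain ⟨c, rfl⟩ := hx.gcd_orderOf_dvd h
  rw [zpow_mul]
  refine zpow_mem (zpow_gcd_mem _ ?_ (mem_zpowers _)) c
  rw [zpow_natCast, pow_orderOf_eq_one]
  exact one_mem _

end OrderOf

section Relations

variable {G : Type*} [Group G] {p q : ℤ} {a b s t : G}

theorem conj_inv_zpow (s x : G) (n : ℤ) : s⁻¹ * x ^ n * s = (s⁻¹ * x * s) ^ n := by
  simpa using conj_zpow (a := s⁻¹) (b := x) (i := n) |>.symm

theorem Commute.zpow_mul_commute_zpow_mul_inv (hab : Commute a b) (p : ℤ) :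
    Commute (a ^ p * b) (a ^ p * b⁻¹) :=
  have hpb : Commute (a ^ p) b := hab.zpow_left p
  ((Commute.refl _).mul_right hpb.inv_right).mul_left
    (hpb.symm.mul_right (Commute.refl b).inv_right)

theorem orderOf_zpow_two_mul_dvd (hab : Commute a b) (hs : s⁻¹ * a ^ q * s = a ^ p * b)
    (ht : t⁻¹ * a ^ q * t = a ^ p * b⁻¹) : orderOf (a ^ (2 * p)) ∣ orderOf (a ^ q) := by
  have hconj (u : G) : (u⁻¹ * a ^ q * u) ^ (orderOf (a ^ q) : ℤ) = 1 := by
    rw [← conj_inv_zpow, zpow_natCast, pow_orderOf_eq_one, mul_one, inv_mul_cancel]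
  have hsplit : a ^ (2 * p) = (a ^ p * b) * (a ^ p * b⁻¹) := by
    rw [(hab.zpow_left p).symm.mul_mul_mul_comm, mul_inv_cancel, mul_one, two_mul, zpow_add]
  rw [← Int.natCast_dvd_natCast, orderOf_dvd_iff_zpow_eq_one, hsplit,
    (hab.zpow_mul_commute_zpow_mul_inv p).mul_zpow, ← hs, ← ht, hconj, hconj, mul_one]

theorem commute_conj_zpow_gcd (hab : Commute a b) (hs : s⁻¹ * a ^ q * s = a ^ p * b)
    (ht : t⁻¹ * a ^ q * t = a ^ p * b⁻¹) (ha : IsOfFinOrder a) :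
    Commute (s⁻¹ * a ^ ((2 * p).gcd q : ℤ) * s) (a ^ p * b⁻¹) := by
  have hmem : a ^ ((2 * p).gcd q : ℤ) ∈ zpowers (a ^ q) :=
    zpow_gcd_mem _ (ha.zpow_mem_zpowers_zpow (orderOf_zpow_two_mul_dvd hab hs ht))
      (mem_zpowers _)
  obtain ⟨c, hc⟩ := mem_zpowers_iff.mp hmem
  rw [← hc, conj_inv_zpow, hs]
  exact (hab.zpow_mul_commute_zpow_mul_inv p).zpow_left c

end Relations

theorem PresentedGroup.map_mk_eq_one {α G : Type*} [Group G] {rels : Set (FreeGroup α)}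
    (φ : PresentedGroup rels →* G) {r : FreeGroup α} (hr : r ∈ rels) :
    φ (PresentedGroup.mk rels r) = 1 := by
  rw [PresentedGroup.one_of_mem hr, map_one]

namespace tubularRels

variable {G : Type*} [Group G] {p q : ℤ} (φ : PresentedGroup (tubularRels p q) →* G)

theorem commute_a_b : Commute (φ (.of 0)) (φ (.of 1)) := by
  have := PresentedGroup.map_mk_eq_one φ (show ga * gb * ga⁻¹ * gb⁻¹ ∈ tubularRels p q by simp [tubularRels])
  simp only [map_mul, map_inv] at this
  exact commutatorElement_eq_one_iff_commute.mp this

theorem conj_s :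
    (φ (.of 2))⁻¹ * φ (.of 0) ^ q * φ (.of 2) = φ (.of 0) ^ p * φ (.of 1) := by
  have := PresentedGroup.map_mk_eq_one φ
    (show gs⁻¹ * ga ^ q * gs * (ga ^ p * gb)⁻¹ ∈ tubularRels p q by simp [tubularRels])
  simp only [map_mul, map_inv, map_zpow] at this
  exact mul_inv_eq_one.mp this

theorem conj_t :
    (φ (.of 3))⁻¹ * φ (.of 0) ^ q * φ (.of 3) = φ (.of 0) ^ p * (φ (.of 1))⁻¹ := by
  have := PresentedGroup.map_mk_eq_one φ
    (show gt⁻¹ * ga ^ q * gt * (ga ^ p * gb⁻¹)⁻¹ ∈ tubularRels p q by simp [tubularRels])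
  simp only [map_mul, map_inv, map_zpow] at this
  exact mul_inv_eq_one.mp this

end tubularRels

theorem commutator_dies_in_finite_quotients_general (p q : ℤ) (h : ℕ) (hh : h = Int.gcd (2 * p) q)
    (F : Type) [Group F] [Finite F]
    (φ : PresentedGroup (tubularRels p q) →* F) :
    φ ⁅(PresentedGroup.of 2 : PresentedGroup (tubularRels p q))⁻¹ *
          (PresentedGroup.of 0) ^ (h : ℤ) * PresentedGroup.of 2,
        (PresentedGroup.of 0) ^ p * (PresentedGroup.of 1)⁻¹⁆ = 1 := by
  subst hh
  rw [map_commutatorElement, commutatorElement_eq_one_iff_commute]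
  simp only [map_mul, map_inv, map_zpow]
  exact commute_conj_zpow_gcd (tubularRels.commute_a_b φ) (tubularRels.conj_s φ)
    (tubularRels.conj_t φ) (isOfFinOrder_of_finite _)

/-- If q ∤ 2p and h = gcd(2p, q), the element [s⁻¹ a^h s, a^p b⁻¹] of G_{p,q}
is killed by every homomorphism to a finite group. -/
theorem commutator_dies_in_finite_quotients (p q : ℤ) (hp : p ≠ 0) (hq : q ≠ 0)
    (hnd : ¬ q ∣ 2 * p) (h : ℕ) (hh : h = Int.gcd (2 * p) q)
    (F : Type) [Group F] [Finite F]
    (φ : PresentedGroup (tubularRels p q) →* F) :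
    φ ⁅(PresentedGroup.of 2 : PresentedGroup (tubularRels p q))⁻¹ *
          (PresentedGroup.of 0) ^ (h : ℤ) * PresentedGroup.of 2,
        (PresentedGroup.of 0) ^ p * (PresentedGroup.of 1)⁻¹⁆ = 1 :=
  commutator_dies_in_finite_quotients_general p q h hh F φ
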